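/- arXiv:2602.20642 — 3 statements merged into one kernel-verified Lean document; each statement's English description precedes it below -/
import Mathlib

section
/- The function $\mathcal{U}(x_1,\ldots,x_n) = -2\sum_{1\le i<j\le n}\log(x_j-x_i)$, defined on the chamber $\{x_1<\cdots<x_n\}\subset\mathbb{R}^n$, satisfies for each $j\in\{1,\ldots,n\}$ the semi-classical BPZ equation $(\partial_j\mathcal{U})^2 - \sum_{\ell\neq j}\left(\frac{4}{x_\ell-x_j}\partial_\ell\mathcal{U} + \frac{12}{(x_\ell-x_j)^2}\right) = 0$. -/
/-!
Differentiating term by term, `∂ₖ𝒰 = 2 ∑_{l ≠ k} 1/(x_l - x_k)`. Writing `a_l = 1/(x_l - x_j)`,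
the BPZ expression becomes `4(∑ a_l)² - 4 ∑ a_l² - 8 ∑_{l, m ≠ j} a_l/(x_m - x_l)`, and the
double sum (whose diagonal terms vanish as `0⁻¹ = 0`) equals `((∑ a_l)² - ∑ a_l²)/2` after
symmetrizing in `(l, m)`, by the partial fraction identity
`a_l/(x_m - x_l) + a_m/(x_l - x_m) = a_l a_m` for `l ≠ m`.
-/

open Finset Function

variable {ι : Type*}

theorem two_nsmul_sum_filter_fst_lt_snd [Fintype ι] [LinearOrder ι] {M : Type*}
    [AddCommMonoid M] (f : ι × ι → M) (hf : ∀ a b, f (a, b) = f (b, a))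
    (hdiag : ∀ a, f (a, a) = 0) :
    2 • ∑ p ∈ univ.filter (fun p : ι × ι => p.1 < p.2), f p = ∑ p, f p := by
  have hswap : ∑ p ∈ univ.filter (fun p : ι × ι => p.2 < p.1), f p
      = ∑ p ∈ univ.filter (fun p : ι × ι => p.1 < p.2), f p := by
    simp only [sum_filter]
    exact Fintype.sum_equiv (Equiv.prodComm ι ι) _ _ fun ⟨a, b⟩ => by
      simp only [Equiv.prodComm_apply, Prod.swap_prod_mk, hf a b]
      rfl
  have hsplit : ∑ p, f p = ∑ p ∈ univ.filter (fun p : ι × ι => p.1 < p.2), f p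
      + ∑ p ∈ univ.filter (fun p : ι × ι => p.2 < p.1), f p := by
    simp only [sum_filter, ← sum_add_distrib]
    refine sum_congr rfl fun ⟨a, b⟩ _ => ?_
    rcases lt_trichotomy a b with h | rfl | h
    · simp [h, h.not_gt]
    · simp [hdiag]
    · simp [h, h.not_gt]
  rw [hsplit, hswap, two_nsmul]

theorem hasFDerivAt_sum_log_sub [Fintype ι] {x : ι → ℝ} (s : Finset (ι × ι))
    (hs : ∀ p ∈ s, x p.1 ≠ x p.2) :
    HasFDerivAt (fun y : ι → ℝ => ∑ p ∈ s, Real.log (y p.2 - y p.1))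
      (∑ p ∈ s, (x p.2 - x p.1)⁻¹ •
        ((ContinuousLinearMap.proj p.2 : (ι → ℝ) →L[ℝ] ℝ) - ContinuousLinearMap.proj p.1)) x :=
  HasFDerivAt.fun_sum fun p hp =>
    ((hasFDerivAt_apply p.2 x).sub (hasFDerivAt_apply p.1 x)).log (sub_ne_zero.2 (hs p hp).symm)

theorem fderiv_const_mul_sum_log_sub_apply_single [Fintype ι] [LinearOrder ι] [DecidableEq ι]
    {x : ι → ℝ} (hx : Injective x) (c : ℝ) (k : ι) :
    fderiv ℝ (fun y : ι → ℝ => c * ∑ p ∈ univ.filter (fun p : ι × ι => p.1 < p.2),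
        Real.log (y p.2 - y p.1)) x (Pi.single k 1) = c * ∑ l ∈ univ.erase k, (x k - x l)⁻¹ := by
  set e : ι → ℝ := Pi.single k 1
  set g : ι × ι → ℝ := fun p => (x p.2 - x p.1)⁻¹ * (e p.2 - e p.1)
  have hg : ∀ a b, g (a, b) = g (b, a) := fun a b => by
    simp only [g]; rw [← neg_sub (x a), inv_neg, ← neg_sub (e a)]; ring
  have hsum : ∑ p, g p = 2 * ∑ l, (x k - x l)⁻¹ := by
    simp only [g, e, Fintype.sum_prod_type, mul_sub, sum_sub_distrib, Pi.single_apply, mul_ite,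
      mul_one, mul_zero, sum_ite_eq', mem_univ, if_true, sum_ite_irrel, sum_const_zero]
    simp only [← neg_sub (x k), inv_neg, sum_neg_distrib]
    ring
  have hhalf := two_nsmul_sum_filter_fst_lt_snd g hg fun a => by simp [g]
  rw [hsum, two_nsmul] at hhalf
  have hderiv := hasFDerivAt_sum_log_sub (univ.filter (fun p : ι × ι => p.1 < p.2))
    (x := x) fun p hp => hx.ne (mem_filter.1 hp).2.ne
  rw [(hderiv.const_mul c).fderiv, sum_erase univ (by rw [sub_self, inv_zero])]
  simp only [smul_apply, FunLike.coe_sum, Finset.sum_apply, sub_apply,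
    ContinuousLinearMap.proj_apply, smul_eq_mul]
  change c * ∑ p ∈ _, g p = _
  congr 1
  linarith

variable [DecidableEq ι]

theorem two_mul_sum_sum_inv_mul_inv_sub (s : Finset ι) {z : ι → ℝ} (hz : Set.InjOn z s)
    (hz0 : ∀ l ∈ s, z l ≠ 0) :
    2 * ∑ l ∈ s, ∑ m ∈ s, (z l)⁻¹ * (z m - z l)⁻¹
      = (∑ l ∈ s, (z l)⁻¹) ^ 2 - ∑ l ∈ s, (z l)⁻¹ ^ 2 := by
  have hcell : ∀ l ∈ s, ∀ m ∈ s, (z l)⁻¹ * (z m - z l)⁻¹ + (z m)⁻¹ * (z l - z m)⁻¹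
      = (z l)⁻¹ * (z m)⁻¹ - if l = m then (z l)⁻¹ ^ 2 else 0 := by
    intro l hl m hm
    by_cases hlm : l = m
    · subst hlm
      simp [sq]
    · have hsub : z m - z l ≠ 0 := sub_ne_zero.2 fun h => hlm (hz hl hm h.symm)
      have hsub' : z l - z m ≠ 0 := sub_ne_zero.2 fun h => hlm (hz hl hm h)
      rw [if_neg hlm, sub_zero]
      field_simp [hz0 l hl, hz0 m hm]
      ring
  calc 2 * ∑ l ∈ s, ∑ m ∈ s, (z l)⁻¹ * (z m - z l)⁻¹
      = ∑ l ∈ s, ∑ m ∈ s, ((z l)⁻¹ * (z m - z l)⁻¹ + (z m)⁻¹ * (z l - z m)⁻¹) := by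
        rw [two_mul]
        nth_rewrite 2 [sum_comm]
        simp only [← sum_add_distrib]
    _ = ∑ l ∈ s, ∑ m ∈ s, ((z l)⁻¹ * (z m)⁻¹ - if l = m then (z l)⁻¹ ^ 2 else 0) :=
        sum_congr rfl fun l hl => sum_congr rfl fun m hm => hcell l hl m hm
    _ = ∑ l ∈ s, ((z l)⁻¹ * ∑ m ∈ s, (z m)⁻¹ - (z l)⁻¹ ^ 2) :=
        sum_congr rfl fun l hl => by rw [sum_sub_distrib, sum_ite_eq, if_pos hl, mul_sum]
    _ = (∑ l ∈ s, (z l)⁻¹) ^ 2 - ∑ l ∈ s, (z l)⁻¹ ^ 2 := by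
        rw [sum_sub_distrib, ← sum_mul, sq]

theorem bpz_expression_eq_zero [Fintype ι] {x : ι → ℝ} (hx : Injective x) (D : ι → ℝ)
    (hD : ∀ k, D k = -2 * ∑ m ∈ univ.erase k, (x k - x m)⁻¹) (j : ι) :
    D j ^ 2 - ∑ l ∈ univ.erase j, (4 / (x l - x j) * D l + 12 / (x l - x j) ^ 2) = 0 := by
  set E := univ.erase j
  set z : ι → ℝ := fun l => x l - x j
  have hz : Injective z := fun a b h => hx (sub_left_injective h)
  have hz0 : ∀ l ∈ E, z l ≠ 0 := fun l hl => sub_ne_zero.2 (hx.ne (ne_of_mem_erase hl))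
  have hDj : D j = 2 * ∑ l ∈ E, (z l)⁻¹ := by
    rw [hD, mul_sum, mul_sum]
    refine sum_congr rfl fun l _ => ?_
    simp only [z, ← neg_sub (x l), inv_neg]
    ring
  have hDl : ∀ l ∈ E, D l = 2 * (∑ m ∈ E, (z m - z l)⁻¹ - (z l)⁻¹) := by
    intro l hl
    rw [hD, sum_erase univ (f := fun m => (x l - x m)⁻¹) (by simp),
      ← add_sum_erase univ _ (mem_univ j)]
    simp only [z, sub_sub_sub_cancel_right, ← neg_sub (x l), inv_neg, sum_neg_distrib]
    ring
  have hterm : ∀ l ∈ E, 4 / z l * D l + 12 / z l ^ 2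
      = 8 * ∑ m ∈ E, (z l)⁻¹ * (z m - z l)⁻¹ + 4 * (z l)⁻¹ ^ 2 := by
    intro l hl
    rw [hDl l hl, ← mul_sum, div_eq_mul_inv, div_eq_mul_inv, ← inv_pow]
    ring
  rw [sum_congr rfl hterm, sum_add_distrib, ← mul_sum, ← mul_sum, hDj]
  linear_combination (-4 : ℝ) * two_mul_sum_sum_inv_mul_inv_sub E hz.injOn hz0

theorem semiclassical_chordal_BPZ_general (n : ℕ)
    (U : (Fin n → ℝ) → ℝ)
    (hU : ∀ y : Fin n → ℝ,
      U y = -2 * ∑ p ∈ Finset.univ.filter (fun p : Fin n × Fin n => p.1 < p.2),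
        Real.log (y p.2 - y p.1))
    (x : Fin n → ℝ) (hx : StrictMono x) (j : Fin n) :
    (fderiv ℝ U x (Pi.single j 1)) ^ 2
      - ∑ l ∈ Finset.univ.filter (fun l : Fin n => l ≠ j),
          (4 / (x l - x j) * fderiv ℝ U x (Pi.single l 1) + 12 / (x l - x j) ^ 2) = 0 := by
  rw [filter_ne']
  refine bpz_expression_eq_zero hx.injective (fun k => fderiv ℝ U x (Pi.single k 1)) (fun k => ?_) j
  rw [funext hU, fderiv_const_mul_sum_log_sub_apply_single hx.injective]

/-- The semi-classical chordal BPZ equations for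
`𝒰(x) = -2 ∑_{i<j} log (x_j - x_i)` on the chamber `{x_1 < ⋯ < x_n}`. -/
theorem semiclassical_chordal_BPZ (n : ℕ) (hn : 1 ≤ n)
    (U : (Fin n → ℝ) → ℝ)
    (hU : ∀ y : Fin n → ℝ,
      U y = -2 * ∑ p ∈ Finset.univ.filter (fun p : Fin n × Fin n => p.1 < p.2),
        Real.log (y p.2 - y p.1))
    (x : Fin n → ℝ) (hx : StrictMono x) (j : Fin n) :
    (fderiv ℝ U x (Pi.single j 1)) ^ 2
      - ∑ l ∈ Finset.univ.filter (fun l : Fin n => l ≠ j),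
          (4 / (x l - x j) * fderiv ℝ U x (Pi.single l 1) + 12 / (x l - x j) ^ 2) = 0 :=
  semiclassical_chordal_BPZ_general n U hU x hx j
end

section
/- The function $\mathcal{V}(\theta_1,\ldots,\theta_n) = -2\sum_{1\le i<j\le n}\log\sin\left(\frac{\theta_j-\theta_i}{2}\right) - \mu\sum_{j=1}^n\theta_j$, defined on $\{\theta_1<\cdots<\theta_n<\theta_1+2\pi\}$, satisfies for each $j$ the semi-classical radial BPZ equation $(\partial_j\mathcal{V})^2 - \sum_{\ell\neq j}\left(2\cot\left(\frac{\theta_\ell-\theta_j}{2}\right)\partial_\ell\mathcal{V} + \frac{3}{\sin^2\left(\frac{\theta_\ell-\theta_j}{2}\right)}\right) = \mu^2 + 1 - n^2$. -/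
/-!
Differentiating term by term gives `∂_l 𝒱 = ∑_{m ≠ l} cot ((θ_m - θ_l) / 2) - μ`, and
`1 / sin² = 1 + cot²`. After these substitutions the equation only involves the kernel
`c a b = cot ((θ_a - θ_b) / 2)`, which is antisymmetric and satisfies the three-term relation
`c a b * c b d + c b d * c d a + c d a * c a b = 1` (cotangent addition for three angles summing
to zero). The left-hand side then equals `μ² - 3 (n - 1)` plus a sum over ordered pairs of distinct
indices `l, m ≠ j` whose terms are all `-1` by the three-term relation; the `(n - 1)(n - 2)` pairs
give `μ² + 1 - n²`.
-/

open Finset Real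

namespace Real

lemma cot_neg (x : ℝ) : cot (-x) = -cot x := by
  simp [cot_eq_cos_div_sin, div_neg]

lemma cot_half_sub_comm (x y : ℝ) : cot ((x - y) / 2) = -cot ((y - x) / 2) := by
  rw [← cot_neg, ← neg_div, neg_sub]

lemma inv_sin_sq_eq_one_add_cot_sq {x : ℝ} (hx : sin x ≠ 0) :
    1 / sin x ^ 2 = 1 + cot x ^ 2 := by
  rw [cot_eq_cos_div_sin]
  field_simp
  linarith [sin_sq_add_cos_sq x]

lemma cot_mul_cot_add_cot_mul_cot_add_cot_mul_cot {x y z : ℝ} (hxyz : x + y + z = 0)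
    (hx : sin x ≠ 0) (hy : sin y ≠ 0) (hz : sin z ≠ 0) :
    cot x * cot y + cot y * cot z + cot z * cot x = 1 := by
  obtain rfl : z = -(x + y) := by linarith
  simp only [cot_eq_cos_div_sin, sin_neg, cos_neg, sin_add, cos_add, neg_ne_zero] at hz ⊢
  field_simp
  ring

lemma hasDerivAt_log_sin {x : ℝ} (hx : sin x ≠ 0) :
    HasDerivAt (fun t ↦ log (sin t)) (cot x) x := by
  simpa [cot_eq_cos_div_sin] using (hasDerivAt_sin x).log hx

end Real

lemma sin_half_sub_ne_zero {ι : Type*} {θ : ι → ℝ} (hθ : Function.Injective θ)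
    (hspan : ∀ a b, θ b - θ a < 2 * π) {a b : ι} (hab : a ≠ b) : sin ((θ a - θ b) / 2) ≠ 0 := by
  have h₁ := hspan a b
  have h₂ := hspan b a
  rw [Ne, sin_eq_zero_iff_of_lt_of_lt (by linarith) (by linarith)]
  exact fun h ↦ hab (hθ (by linarith))

section Ordered

variable {ι R : Type*} [Fintype ι] [LinearOrder ι] [CommRing R]

lemma sum_lt_pairs_mul_single_sub_single (φ : ι → ι → R) (hφ : ∀ i k, i < k → φ k i = -φ i k)
    (l : ι) :
    ∑ p ∈ univ.filter (fun p : ι × ι ↦ p.1 < p.2),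
        φ p.1 p.2 * ((Pi.single l 1 : ι → R) p.2 - (Pi.single l 1 : ι → R) p.1)
      = ∑ m ∈ univ.filter (· ≠ l), φ m l := by
  simp only [sum_filter, Fintype.sum_prod_type, Pi.single_apply, mul_sub, mul_ite, mul_one,
    mul_zero]
  have hsplit : ∀ x y : ι,
      (if x < y then (if y = l then φ x y else 0) - (if x = l then φ x y else 0) else 0)
      = (if y = l then (if x < l then φ x l else 0) else 0)
        - (if x = l then (if l < y then -φ y l else 0) else 0) := by
    intro x y
    split_ifs <;> simp_all
  simp only [hsplit, sum_sub_distrib, sum_ite_eq', mem_univ, if_true]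
  rw [sum_comm]
  simp only [sum_ite_eq', mem_univ, if_true, ← sum_sub_distrib]
  refine sum_congr rfl fun m _ ↦ ?_
  rcases lt_trichotomy m l with h | rfl | h
  · simp [h, h.ne, not_lt_of_gt h]
  · simp
  · simp [h, h.ne', not_lt_of_gt h]

end Ordered

section Cocycle

variable {ι R : Type*} [DecidableEq ι]

lemma sum_sum_erase_comm [AddCommMonoid R] (s : Finset ι) (g : ι → ι → R) :
    ∑ l ∈ s, ∑ m ∈ s.erase l, g l m = ∑ l ∈ s, ∑ m ∈ s.erase l, g m l :=
  sum_comm' fun l m ↦ by simp only [mem_erase]; tauto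

variable [CommRing R]

lemma sq_sum_sub_sum_sq_sub_two_mul_sum_sum_erase (s : Finset ι) (a : ι → R) (g : ι → ι → R)
    (hanti : ∀ l ∈ s, ∀ m ∈ s, l ≠ m → g l m = -g m l)
    (htriangle : ∀ l ∈ s, ∀ m ∈ s, l ≠ m → a l * a m - a l * g m l + a m * g m l = -1) :
    (∑ l ∈ s, a l) ^ 2 - ∑ l ∈ s, a l ^ 2 - 2 * ∑ l ∈ s, ∑ m ∈ s.erase l, a l * g m l
      = -(#s * (#s - 1)) := by
  have hsq :
      (∑ l ∈ s, a l) ^ 2 = ∑ l ∈ s, a l ^ 2 + ∑ l ∈ s, ∑ m ∈ s.erase l, a l * a m := by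
    rw [sq, sum_mul_sum, ← sum_add_distrib]
    refine sum_congr rfl fun l hl ↦ ?_
    rw [← add_sum_erase _ _ hl, sq]
  have hswap : ∑ l ∈ s, ∑ m ∈ s.erase l, a l * g m l
      = -∑ l ∈ s, ∑ m ∈ s.erase l, a m * g m l := by
    rw [sum_sum_erase_comm s (fun l m ↦ a l * g m l)]
    simp only [← sum_neg_distrib]
    refine sum_congr rfl fun l hl ↦ sum_congr rfl fun m hm ↦ ?_
    rw [hanti l hl m (mem_of_mem_erase hm) (ne_of_mem_erase hm).symm, mul_neg]
  have hcount : ∑ l ∈ s, ∑ m ∈ s.erase l, (a l * a m - a l * g m l + a m * g m l)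
      = -(#s * (#s - 1)) := by
    rw [sum_congr rfl fun l hl ↦ (sum_congr rfl fun m hm ↦ htriangle l hl m
      (mem_of_mem_erase hm) (ne_of_mem_erase hm).symm).trans (sum_erase_eq_sub hl)]
    simp only [sum_const, nsmul_eq_mul]
    ring
  simp only [sum_add_distrib, sum_sub_distrib] at hcount
  linear_combination hsq + hcount - hswap

variable [Fintype ι]

theorem bpz_identity_of_antisymm_of_cyclic (f : ι → ι → R)
    (hanti : ∀ a b, a ≠ b → f a b = -f b a)
    (hcyc : ∀ a b c, a ≠ b → b ≠ c → c ≠ a → f a b * f b c + f b c * f c a + f c a * f a b = 1)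
    (μ : R) (j : ι) :
    (∑ m ∈ univ.filter (· ≠ j), f m j - μ) ^ 2
      - ∑ l ∈ univ.filter (· ≠ j),
          (2 * f l j * (∑ m ∈ univ.filter (· ≠ l), f m l - μ) + 3 * (1 + f l j ^ 2))
      = μ ^ 2 + 1 - (Fintype.card ι : R) ^ 2 := by
  simp only [filter_ne']
  set s := univ.erase j
  have hj : ∀ l ∈ s, l ≠ j := fun l hl ↦ ne_of_mem_erase hl
  have hsplit : ∀ l ∈ s, ∑ m ∈ univ.erase l, f m l = -f l j + ∑ m ∈ s.erase l, f m l := by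
    intro l hl
    rw [← add_sum_erase _ _ (mem_erase.2 ⟨(hj l hl).symm, mem_univ j⟩), erase_right_comm,
      hanti j l (hj l hl).symm]
  have hexpand : ∀ l ∈ s, 2 * f l j * (∑ m ∈ univ.erase l, f m l - μ) + 3 * (1 + f l j ^ 2)
      = f l j ^ 2 + 2 * ∑ m ∈ s.erase l, f l j * f m l - 2 * μ * f l j + 3 := by
    intro l hl
    rw [hsplit l hl, ← mul_sum]
    ring
  have hsum : ∑ l ∈ s, (f l j ^ 2 + 2 * ∑ m ∈ s.erase l, f l j * f m l - 2 * μ * f l j + 3)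
      = ∑ l ∈ s, f l j ^ 2 + 2 * ∑ l ∈ s, ∑ m ∈ s.erase l, f l j * f m l
        - 2 * μ * ∑ l ∈ s, f l j + 3 * #s := by
    rw [sum_add_distrib, sum_sub_distrib, sum_add_distrib, ← mul_sum, ← mul_sum, sum_const,
      nsmul_eq_mul]
    ring
  have hpairs := sq_sum_sub_sum_sq_sub_two_mul_sum_sum_erase s (f · j) f
    (fun l _ m _ hlm ↦ hanti l m hlm) fun l hl m hm hlm ↦ by
      have h := hcyc l j m (hj l hl) (hj m hm).symm hlm.symm
      rw [hanti j m (hj m hm).symm] at h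
      linear_combination -h
  have hcard : (Fintype.card ι : R) = #s + 1 := by
    rw [← card_univ, ← card_erase_add_one (mem_univ j), Nat.cast_add_one]
  rw [sum_congr rfl hexpand, hsum, hcard]
  linear_combination hpairs

end Cocycle

section Potential

variable {ι : Type*} [Fintype ι]

lemma hasFDerivAt_log_sin_half_sub (θ : ι → ℝ) {a b : ι} (h : sin ((θ b - θ a) / 2) ≠ 0) :
    HasFDerivAt (fun y : ι → ℝ ↦ log (sin ((y b - y a) / 2)))
      (cot ((θ b - θ a) / 2) • (2⁻¹ : ℝ) •
        ((ContinuousLinearMap.proj b : (ι → ℝ) →L[ℝ] ℝ) - ContinuousLinearMap.proj a)) θ := by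
  have hlin :=
    ((hasFDerivAt_apply (𝕜 := ℝ) b θ).fun_sub (hasFDerivAt_apply a θ)).mul_const (2⁻¹ : ℝ)
  simpa only [← div_eq_mul_inv, Function.comp_def] using
    (hasDerivAt_log_sin h).comp_hasFDerivAt θ hlin

variable [LinearOrder ι]

lemma fderiv_logSinPotential_apply_single (μ : ℝ) (θ : ι → ℝ)
    (hθ : ∀ a b, a < b → sin ((θ b - θ a) / 2) ≠ 0) (l : ι) :
    fderiv ℝ (fun y : ι → ℝ ↦ -2 * (∑ p ∈ univ.filter (fun p : ι × ι ↦ p.1 < p.2),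
        log (sin ((y p.2 - y p.1) / 2))) - μ * ∑ i, y i) θ (Pi.single l 1)
      = ∑ m ∈ univ.filter (· ≠ l), cot ((θ m - θ l) / 2) - μ := by
  have hpair : ∀ p ∈ univ.filter (fun p : ι × ι ↦ p.1 < p.2), _ := fun p hp ↦
      hasFDerivAt_log_sin_half_sub θ (hθ p.1 p.2 (mem_filter.1 hp).2)
  have hpairs := HasFDerivAt.fun_sum hpair
  have hlin := HasFDerivAt.fun_sum (u := univ) fun i _ ↦ hasFDerivAt_apply (𝕜 := ℝ) i θ
  rw [((hpairs.const_mul (-2)).fun_sub (hlin.const_mul μ)).fderiv]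
  simp only [sub_apply, FunLike.coe_smul, FunLike.coe_sum, Pi.smul_apply, Finset.sum_apply,
    ContinuousLinearMap.proj_apply, smul_eq_mul, sum_pi_single', mem_univ, if_true, mul_one]
  calc -2 * ∑ p ∈ univ.filter (fun p : ι × ι ↦ p.1 < p.2), cot ((θ p.2 - θ p.1) / 2) *
          (2⁻¹ * ((Pi.single l 1 : ι → ℝ) p.2 - (Pi.single l 1 : ι → ℝ) p.1)) - μ
      = ∑ p ∈ univ.filter (fun p : ι × ι ↦ p.1 < p.2), -cot ((θ p.2 - θ p.1) / 2) *
          ((Pi.single l 1 : ι → ℝ) p.2 - (Pi.single l 1 : ι → ℝ) p.1) - μ := by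
        rw [mul_sum]
        exact congrArg (· - μ) (sum_congr rfl fun p _ ↦ by ring)
    _ = ∑ m ∈ univ.filter (· ≠ l), -cot ((θ l - θ m) / 2) - μ := by
        rw [sum_lt_pairs_mul_single_sub_single (fun i k ↦ -cot ((θ k - θ i) / 2))
          (fun i k _ ↦ by rw [cot_half_sub_comm]) l]
    _ = ∑ m ∈ univ.filter (· ≠ l), cot ((θ m - θ l) / 2) - μ := by
        simp only [cot_half_sub_comm (θ l), neg_neg]

end Potential

theorem semiclassical_radial_BPZ_general (n : ℕ) (μ : ℝ)
    (V : (Fin n → ℝ) → ℝ)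
    (hV : ∀ y : Fin n → ℝ,
      V y = -2 * (∑ p ∈ Finset.univ.filter (fun p : Fin n × Fin n => p.1 < p.2),
          Real.log (Real.sin ((y p.2 - y p.1) / 2))) - μ * ∑ j, y j)
    (θ : Fin n → ℝ) (hθ : StrictMono θ)
    (hθ2π : ∀ i j : Fin n, θ j - θ i < 2 * Real.pi)
    (j : Fin n) :
    (fderiv ℝ V θ (Pi.single j 1)) ^ 2
      - ∑ l ∈ Finset.univ.filter (fun l : Fin n => l ≠ j),
          (2 * Real.cot ((θ l - θ j) / 2) * fderiv ℝ V θ (Pi.single l 1)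
            + 3 / (Real.sin ((θ l - θ j) / 2)) ^ 2)
      = μ ^ 2 + 1 - (n : ℝ) ^ 2 := by
  have hsin : ∀ a b, a ≠ b → sin ((θ a - θ b) / 2) ≠ 0 :=
    fun a b ↦ sin_half_sub_ne_zero hθ.injective hθ2π
  have hpartial : ∀ l, fderiv ℝ V θ (Pi.single l 1)
      = ∑ m ∈ univ.filter (· ≠ l), cot ((θ m - θ l) / 2) - μ := by
    rw [funext hV]
    exact fderiv_logSinPotential_apply_single μ θ fun a b hab ↦ hsin b a hab.ne'
  have hinv : ∀ l ∈ univ.filter (· ≠ j),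
      3 / sin ((θ l - θ j) / 2) ^ 2 = 3 * (1 + cot ((θ l - θ j) / 2) ^ 2) := by
    intro l hl
    rw [div_eq_mul_one_div, inv_sin_sq_eq_one_add_cot_sq (hsin l j (mem_filter.1 hl).2)]
  have hbpz := bpz_identity_of_antisymm_of_cyclic (fun a b ↦ cot ((θ a - θ b) / 2))
    (fun a b _ ↦ cot_half_sub_comm (θ a) (θ b))
    (fun a b c hab hbc hca ↦ cot_mul_cot_add_cot_mul_cot_add_cot_mul_cot (by ring)
      (hsin a b hab) (hsin b c hbc) (hsin c a hca)) μ j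
  rw [Fintype.card_fin] at hbpz
  rw [← hbpz, hpartial]
  congr 1
  exact sum_congr rfl fun l hl ↦ by rw [hpartial, hinv l hl]

/-- The semi-classical radial BPZ equations for
`𝒱(θ) = -2 ∑_{i<j} log sin((θ_j - θ_i)/2) - μ ∑_j θ_j` on the chamber
`{θ_1 < ⋯ < θ_n < θ_1 + 2π}`. -/
theorem semiclassical_radial_BPZ (n : ℕ) (hn : 1 ≤ n) (μ : ℝ)
    (V : (Fin n → ℝ) → ℝ)
    (hV : ∀ y : Fin n → ℝ,
      V y = -2 * (∑ p ∈ Finset.univ.filter (fun p : Fin n × Fin n => p.1 < p.2),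
          Real.log (Real.sin ((y p.2 - y p.1) / 2))) - μ * ∑ j, y j)
    (θ : Fin n → ℝ) (hθ : StrictMono θ)
    (hθ2π : ∀ i j : Fin n, θ j - θ i < 2 * Real.pi)
    (j : Fin n) :
    (fderiv ℝ V θ (Pi.single j 1)) ^ 2
      - ∑ l ∈ Finset.univ.filter (fun l : Fin n => l ≠ j),
          (2 * Real.cot ((θ l - θ j) / 2) * fderiv ℝ V θ (Pi.single l 1)
            + 3 / (Real.sin ((θ l - θ j) / 2)) ^ 2)
      = μ ^ 2 + 1 - (n : ℝ) ^ 2 :=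
  semiclassical_radial_BPZ_general n μ V hV θ hθ hθ2π j
end

section
/- Let $0<\kappa<4\alpha$, $\mu\in\mathbb{R}$, $X_0\in(0,2\pi)$, and define $f(\theta) = \frac{2}{\kappa}\int_\theta^{X_0}\int_y^{X_0}\frac{\sin(u/2)^{4\alpha/\kappa}e^{-2\mu u/\kappa}}{\sin(y/2)^{4\alpha/\kappa}e^{-2\mu y/\kappa}}\,du\,dy$. Then $f\ge 0$ on $(0,2\pi)$, $f$ satisfies the ODE $\frac{\kappa}{2}f''(\theta) + f'(\theta)(\alpha\cot(\theta/2)-\mu) - 1 = 0$ with $f(X_0)=0$, $f'(X_0)=0$, and for $0<\epsilon<X_0$, $f(\epsilon)\ge \frac{2}{4\alpha+\kappa}e^{-8|\mu|\pi/\kappa}\left(\frac{2\sin(X_0/2)}{X_0}\right)^{4\alpha/\kappa}\left(\frac{\kappa X_0^{4\alpha/\kappa+1}}{4\alpha-\kappa}\epsilon^{1-4\alpha/\kappa} - \frac{4\alpha+\kappa}{8\alpha-2\kappa}X_0^2\right)$. -/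
/-!
With `r = 4α/κ`, `c = -2μ/κ` and the weight `w(u) = sin(u/2)^r e^{cu}`, the function is
`f = (2/κ) ∫_θ^{X₀} G` where `G(y) = (∫_y^{X₀} w) / w(y)`. Since `w' = w (r/2 cot(u/2) + c)`,
the quotient rule gives `G' = -1 - G (r/2 cot(y/2) + c)`, which is the ODE for `f' = -(2/κ) G`.
`G` has the sign of `X₀ - y`, so `f ≥ 0`. For the lower bound, `sin(u/2) ≥ (sin(X₀/2)/X₀) u` and
`sin(y/2) ≤ y/2` bound `G(y)` below by a multiple of `y^{-r} ∫_y^{X₀} u^r du`, whose integral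
over `[ε, X₀]` is explicit for `r ≠ 1`; the stated bound drops its `ε²` term.
-/

open intervalIntegral Real Set

namespace RadialBessel

noncomputable def tailRatio (w : ℝ → ℝ) (x₀ y : ℝ) : ℝ := (∫ u in y..x₀, w u) / w y

section TailRatio

variable {w : ℝ → ℝ} {x₀ y θ a b : ℝ}

theorem hasDerivAt_integral_left (hw : Continuous w) (x₀ y : ℝ) :
    HasDerivAt (fun y => ∫ u in y..x₀, w u) (-w y) y :=
  integral_hasDerivAt_left (hw.intervalIntegrable _ _) (hw.stronglyMeasurableAtFilter _ _)
    hw.continuousAt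

theorem continuousOn_tailRatio {s : Set ℝ} (hw : Continuous w) (hs : ∀ y ∈ s, w y ≠ 0) :
    ContinuousOn (tailRatio w x₀) s :=
  (continuous_iff_continuousAt.2 fun y =>
    (hasDerivAt_integral_left hw x₀ y).continuousAt).continuousOn.div hw.continuousOn hs

theorem hasDerivAt_tailRatio {c : ℝ} (hw : Continuous w) (hy : w y ≠ 0)
    (hc : HasDerivAt w (w y * c) y) :
    HasDerivAt (tailRatio w x₀) (-1 - tailRatio w x₀ y * c) y := by
  refine ((hasDerivAt_integral_left hw x₀ y).div hc hy).congr_deriv ?_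
  rw [tailRatio]
  field_simp

theorem integral_tailRatio_nonneg (hw : ∀ u ∈ uIcc θ x₀, 0 ≤ w u) :
    0 ≤ ∫ y in θ..x₀, tailRatio w x₀ y := by
  rcases le_total θ x₀ with h | h
  · refine integral_nonneg h fun y hy => div_nonneg ?_ (hw y (Icc_subset_uIcc hy))
    exact integral_nonneg hy.2 fun u hu => hw u (Icc_subset_uIcc ⟨hy.1.trans hu.1, hu.2⟩)
  · rw [integral_symm, ← integral_neg]
    refine integral_nonneg h fun y hy => ?_
    rw [neg_nonneg, tailRatio, integral_symm]
    refine div_nonpos_of_nonpos_of_nonneg (neg_nonpos.2 ?_) (hw y (Icc_subset_uIcc' hy))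
    exact integral_nonneg hy.1 fun u hu => hw u (Icc_subset_uIcc' ⟨hu.1, hu.2.trans hy.2⟩)

theorem hasDerivAt_integral_tailRatio (hw : Continuous w) (hpos : ∀ y ∈ Ioo a b, 0 < w y)
    (hx₀ : x₀ ∈ Ioo a b) (hθ : θ ∈ Ioo a b) :
    HasDerivAt (fun t => ∫ y in t..x₀, tailRatio w x₀ y) (-tailRatio w x₀ θ) θ := by
  have hG : ContinuousOn (tailRatio w x₀) (Ioo a b) :=
    continuousOn_tailRatio hw fun y hy => (hpos y hy).ne'
  exact integral_hasDerivAt_left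
    ((hG.mono (ordConnected_Ioo.uIcc_subset hθ hx₀)).intervalIntegrable)
    (hG.stronglyMeasurableAtFilter isOpen_Ioo θ hθ) (hG.continuousAt (isOpen_Ioo.mem_nhds hθ))

theorem hasDerivAt_deriv_integral_tailRatio {c : ℝ} (hw : Continuous w)
    (hpos : ∀ y ∈ Ioo a b, 0 < w y) (hx₀ : x₀ ∈ Ioo a b) (hθ : θ ∈ Ioo a b)
    (hc : HasDerivAt w (w θ * c) θ) :
    HasDerivAt (deriv fun t => ∫ y in t..x₀, tailRatio w x₀ y)
      (1 + tailRatio w x₀ θ * c) θ := by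
  have hderiv : (deriv fun t => ∫ y in t..x₀, tailRatio w x₀ y) =ᶠ[nhds θ]
      fun t => -tailRatio w x₀ t := by
    filter_upwards [isOpen_Ioo.mem_nhds hθ] with t ht
    exact (hasDerivAt_integral_tailRatio hw hpos hx₀ ht).deriv
  refine ((hasDerivAt_tailRatio hw (hpos θ hθ).ne' hc).neg.congr_of_eventuallyEq
    hderiv).congr_deriv ?_
  ring

end TailRatio

noncomputable def weight (r c u : ℝ) : ℝ := sin (u / 2) ^ r * exp (c * u)

section Weight

variable {r c u y X₀ d : ℝ}

theorem sin_half_pos (hu : u ∈ Ioo 0 (2 * π)) : 0 < sin (u / 2) :=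
  sin_pos_of_pos_of_lt_pi (by linarith [hu.1]) (by linarith [hu.2])

theorem continuous_weight (hr : 0 ≤ r) : Continuous (weight r c) := by
  unfold weight
  exact ((continuous_sin.comp (continuous_id.div_const 2)).rpow_const fun _ => Or.inr hr).mul
    (continuous_exp.comp (continuous_const.mul continuous_id))

theorem weight_pos (hu : u ∈ Ioo 0 (2 * π)) : 0 < weight r c u :=
  mul_pos (rpow_pos_of_pos (sin_half_pos hu) r) (exp_pos _)

theorem hasDerivAt_weight (hu : u ∈ Ioo 0 (2 * π)) :
    HasDerivAt (weight r c) (weight r c u * (r / 2 * cot (u / 2) + c)) u := by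
  have hs := sin_half_pos hu
  refine ((((hasDerivAt_id' u).div_const 2).sin.rpow_const (p := r) (Or.inl hs.ne')).fun_mul
    ((hasDerivAt_id' u).const_mul c).exp).congr_deriv ?_
  rw [weight, cot_eq_cos_div_sin, rpow_sub_one hs.ne']
  field_simp

/-- Concavity of `sin` on `[0, π]`: the chord from `0` to `X₀ / 2` lies below the graph. -/
theorem sin_div_mul_le_sin_half (hX₀ : 0 < X₀) (hX₀π : X₀ ≤ 2 * π) (hu : 0 ≤ u) (huX : u ≤ X₀) :
    sin (X₀ / 2) / X₀ * u ≤ sin (u / 2) := by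
  have key := strictConcaveOn_sin_Icc.concaveOn.2 (x := 0) (y := X₀ / 2)
    ⟨le_rfl, pi_pos.le⟩ ⟨by positivity, by linarith⟩
    (sub_nonneg.2 ((div_le_one hX₀).2 huX)) (by positivity) (sub_add_cancel 1 (u / X₀))
  have harg : (1 - u / X₀) • (0 : ℝ) + (u / X₀) • (X₀ / 2) = u / 2 := by
    simp only [smul_eq_mul, mul_zero, zero_add]
    field_simp
  rw [harg, smul_eq_mul, smul_eq_mul, sin_zero, mul_zero, zero_add] at key
  calc sin (X₀ / 2) / X₀ * u = u / X₀ * sin (X₀ / 2) := by ring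
    _ ≤ _ := key

theorem exp_sub_abs_mul_le (h : |u - y| ≤ d) : exp (c * y - |c| * d) ≤ exp (c * u) := by
  refine exp_le_exp.2 ?_
  have : -(c * (u - y)) ≤ |c| * d := calc
    -(c * (u - y)) ≤ |c * (u - y)| := neg_le_abs _
    _ = |c| * |u - y| := abs_mul _ _
    _ ≤ |c| * d := mul_le_mul_of_nonneg_left h (abs_nonneg c)
  linarith

theorem weight_le_half_rpow (hr : 0 ≤ r) (hy : 0 ≤ y) (hyπ : y ≤ 2 * π) :
    weight r c y ≤ (y / 2) ^ r * exp (c * y) :=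
  mul_le_mul_of_nonneg_right
    (rpow_le_rpow (sin_nonneg_of_nonneg_of_le_pi (by linarith) (by linarith))
      (sin_le (by linarith)) hr) (exp_pos _).le

theorem rpow_mul_le_weight (hr : 0 ≤ r) (hX₀ : 0 < X₀) (hX₀π : X₀ ≤ 2 * π) (hy : 0 ≤ y)
    (hyu : y ≤ u) (huX : u ≤ X₀) (hd : X₀ ≤ d) :
    (sin (X₀ / 2) / X₀) ^ r * exp (c * y - |c| * d) * u ^ r ≤ weight r c u := by
  have hs : 0 ≤ sin (X₀ / 2) / X₀ :=
    div_nonneg (sin_nonneg_of_nonneg_of_le_pi (by linarith) (by linarith)) hX₀.le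
  have hsin : (sin (X₀ / 2) / X₀) ^ r * u ^ r ≤ sin (u / 2) ^ r := by
    rw [← mul_rpow hs (by linarith)]
    exact rpow_le_rpow (mul_nonneg hs (by linarith))
      (sin_div_mul_le_sin_half hX₀ hX₀π (by linarith) huX) hr
  have hexp : exp (c * y - |c| * d) ≤ exp (c * u) :=
    exp_sub_abs_mul_le (by rw [abs_of_nonneg (by linarith)]; linarith)
  calc (sin (X₀ / 2) / X₀) ^ r * exp (c * y - |c| * d) * u ^ r
      = (sin (X₀ / 2) / X₀) ^ r * u ^ r * exp (c * y - |c| * d) := by ring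
    _ ≤ sin (u / 2) ^ r * exp (c * u) :=
      mul_le_mul hsin hexp (exp_pos _).le
        (rpow_nonneg (sin_nonneg_of_nonneg_of_le_pi (by linarith) (by linarith)) _)
    _ = weight r c u := rfl

theorem integral_weight_ge (hr : 0 ≤ r) (hX₀ : 0 < X₀) (hX₀π : X₀ ≤ 2 * π) (hy : 0 ≤ y)
    (hyX : y ≤ X₀) (hd : X₀ ≤ d) :
    (sin (X₀ / 2) / X₀) ^ r * exp (c * y - |c| * d) * ((X₀ ^ (r + 1) - y ^ (r + 1)) / (r + 1))
      ≤ ∫ u in y..X₀, weight r c u := by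
  rw [← integral_rpow (Or.inl (by linarith)), ← integral_const_mul]
  exact integral_mono_on hyX
    ((continuous_const.mul (continuous_id.rpow_const fun _ => Or.inr hr)).intervalIntegrable _ _)
    ((continuous_weight hr).intervalIntegrable _ _)
    fun u hu => rpow_mul_le_weight hr hX₀ hX₀π hy hu.1 hu.2 hd

theorem tailRatio_weight_ge (hr : 0 ≤ r) (hy : 0 < y) (hyX : y ≤ X₀) (hX₀π : X₀ < 2 * π)
    (hd : X₀ ≤ d) :
    exp (-(|c| * d)) * (2 * sin (X₀ / 2) / X₀) ^ r / (r + 1)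
        * (y ^ (-r) * (X₀ ^ (r + 1) - y ^ (r + 1)))
      ≤ tailRatio (weight r c) X₀ y := by
  have hX₀ : 0 < X₀ := hy.trans_le hyX
  have hs : 0 ≤ 2 * sin (X₀ / 2) / X₀ :=
    div_nonneg (mul_nonneg zero_le_two (sin_half_pos ⟨hX₀, hX₀π⟩).le) hX₀.le
  have hlhs : 0 ≤ exp (-(|c| * d)) * (2 * sin (X₀ / 2) / X₀) ^ r / (r + 1)
      * (y ^ (-r) * (X₀ ^ (r + 1) - y ^ (r + 1))) := by
    have hmono := rpow_le_rpow hy.le hyX (by linarith : 0 ≤ r + 1)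
    have hQ := rpow_nonneg hs r
    have hyr := rpow_nonneg hy.le (-r)
    positivity
  have hpow : (2 * sin (X₀ / 2) / X₀) ^ r * y ^ (-r) * (y / 2) ^ r = (sin (X₀ / 2) / X₀) ^ r := by
    rw [rpow_neg hy.le, ← inv_rpow hy.le, ← mul_rpow hs (by positivity),
      ← mul_rpow (by positivity) (by positivity)]
    congr 1
    field_simp
  have hexp : exp (-(|c| * d)) * exp (c * y) = exp (c * y - |c| * d) := by
    rw [← exp_add]
    ring_nf
  rw [tailRatio, le_div_iff₀ (weight_pos ⟨hy, by linarith⟩)]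
  calc _ ≤ exp (-(|c| * d)) * (2 * sin (X₀ / 2) / X₀) ^ r / (r + 1)
        * (y ^ (-r) * (X₀ ^ (r + 1) - y ^ (r + 1))) * ((y / 2) ^ r * exp (c * y)) :=
        mul_le_mul_of_nonneg_left (weight_le_half_rpow hr hy.le (by linarith)) hlhs
    _ = (sin (X₀ / 2) / X₀) ^ r * exp (c * y - |c| * d)
        * ((X₀ ^ (r + 1) - y ^ (r + 1)) / (r + 1)) := by
        rw [← hpow, ← hexp]
        ring
    _ ≤ _ := integral_weight_ge hr hX₀ hX₀π.le hy.le hyX hd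

end Weight

theorem integral_rpow_neg_mul_sub {r ε X₀ : ℝ} (hr : r ≠ 1) (hε : 0 < ε) (hX₀ : 0 < X₀) :
    ∫ y in ε..X₀, y ^ (-r) * (X₀ ^ (r + 1) - y ^ (r + 1))
      = (X₀ ^ (r + 1) * ε ^ (1 - r) - X₀ ^ 2) / (r - 1) - (X₀ ^ 2 - ε ^ 2) / 2 := by
  have hpos : ∀ y ∈ uIcc ε X₀, 0 < y := fun y hy => (lt_min hε hX₀).trans_le hy.1
  have h0 : (0 : ℝ) ∉ uIcc ε X₀ := fun h => lt_irrefl 0 (hpos 0 h)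
  have hint : IntervalIntegrable (fun y => X₀ ^ (r + 1) * y ^ (-r)) MeasureTheory.volume ε X₀ :=
    ContinuousOn.intervalIntegrable <| continuousOn_const.mul fun y hy =>
      (continuousAt_rpow_const y (-r) (Or.inl (hpos y hy).ne')).continuousWithinAt
  have hsimp : EqOn (fun y : ℝ => y ^ (-r) * (X₀ ^ (r + 1) - y ^ (r + 1)))
      (fun y => X₀ ^ (r + 1) * y ^ (-r) - y) (uIcc ε X₀) := fun y hy => by
    simp only
    rw [mul_sub, ← rpow_add (hpos y hy), neg_add_cancel_left, rpow_one, mul_comm]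
  have hX : X₀ ^ (r + 1) * X₀ ^ (-r + 1) = X₀ ^ 2 := by
    rw [← rpow_add hX₀, show r + 1 + (-r + 1) = (2 : ℕ) by push_cast; ring, rpow_natCast]
  rw [integral_congr hsimp, integral_sub hint intervalIntegrable_id, integral_const_mul,
    integral_rpow (Or.inr ⟨by contrapose! hr; linarith, h0⟩), integral_id, mul_div_assoc',
    mul_sub, hX, show -r + 1 = 1 - r by ring]
  have : r - 1 ≠ 0 := sub_ne_zero.2 hr
  have : 1 - r ≠ 0 := sub_ne_zero.2 hr.symm
  field_simp
  ring

theorem integral_tailRatio_weight_ge {r c ε X₀ d : ℝ} (hr : 1 < r) (hε : 0 < ε) (hεX : ε ≤ X₀)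
    (hX₀π : X₀ < 2 * π) (hd : X₀ ≤ d) :
    exp (-(|c| * d)) * (2 * sin (X₀ / 2) / X₀) ^ r / (r + 1)
        * ((X₀ ^ (r + 1) * ε ^ (1 - r) - X₀ ^ 2) / (r - 1) - (X₀ ^ 2 - ε ^ 2) / 2)
      ≤ ∫ y in ε..X₀, tailRatio (weight r c) X₀ y := by
  have hsub : uIcc ε X₀ ⊆ Ioo 0 (2 * π) := by
    rw [uIcc_of_le hεX]
    exact fun y hy => ⟨hε.trans_le hy.1, hy.2.trans_lt hX₀π⟩
  have hbound : ContinuousOn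
      (fun y => y ^ (-r) * (X₀ ^ (r + 1) - y ^ (r + 1))) (uIcc ε X₀) := by
    refine ContinuousOn.mul (fun y hy => ?_)
      (continuous_const.sub (continuous_id.rpow_const fun _ => Or.inr (by linarith))).continuousOn
    exact (continuousAt_rpow_const y (-r) (Or.inl (hsub hy).1.ne')).continuousWithinAt
  rw [← integral_rpow_neg_mul_sub hr.ne' hε (hε.trans_le hεX), ← integral_const_mul]
  exact integral_mono_on hεX (continuousOn_const.mul hbound).intervalIntegrable
    ((continuousOn_tailRatio (continuous_weight (by linarith))
      fun y hy => (weight_pos (hsub hy)).ne').intervalIntegrable)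
    fun y hy => tailRatio_weight_ge (by linarith) (hε.trans_le hy.1) hy.2 hX₀π hd

theorem two_div_add_mul_le_two_div_mul {κ α E A B X ε : ℝ} (hκ : 0 < κ) (hκα : κ < 4 * α)
    (hE : 0 ≤ E) :
    2 / (4 * α + κ) * E * (κ * A / (4 * α - κ) * B - (4 * α + κ) / (8 * α - 2 * κ) * X ^ 2)
      ≤ 2 / κ * (E / (4 * α / κ + 1)
          * ((A * B - X ^ 2) / (4 * α / κ - 1) - (X ^ 2 - ε ^ 2) / 2)) := by
  have h4 : 4 * α - κ ≠ 0 := by linarith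
  have h4' : 4 * α + κ ≠ 0 := by linarith
  refine le_of_sub_nonneg ?_
  rw [show 8 * α - 2 * κ = 2 * (4 * α - κ) by ring]
  have hdiff : 2 / κ * (E / (4 * α / κ + 1)
          * ((A * B - X ^ 2) / (4 * α / κ - 1) - (X ^ 2 - ε ^ 2) / 2))
      - 2 / (4 * α + κ) * E * (κ * A / (4 * α - κ) * B - (4 * α + κ) / (2 * (4 * α - κ)) * X ^ 2)
      = E * ε ^ 2 / (4 * α + κ) := by
    field_simp
    ring
  rw [hdiff]
  exact div_nonneg (mul_nonneg hE (sq_nonneg ε)) (by linarith)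

end RadialBessel

open RadialBessel

theorem radial_Bessel_auxiliary_function_general (κ α μ X0 : ℝ)
    (hκ : 0 < κ) (hκα : κ < 4 * α)
    (hX0 : X0 ∈ Set.Ioo (0 : ℝ) (2 * Real.pi))
    (f : ℝ → ℝ)
    (hf : ∀ θ : ℝ, f θ = (2 / κ) * ∫ y in θ..X0, ∫ u in y..X0,
        (Real.sin (u / 2) ^ (4 * α / κ) * Real.exp (-2 * μ * u / κ))
          / (Real.sin (y / 2) ^ (4 * α / κ) * Real.exp (-2 * μ * y / κ))) :
    (∀ θ ∈ Set.Ioo (0 : ℝ) (2 * Real.pi), 0 ≤ f θ) ∧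
    f X0 = 0 ∧ deriv f X0 = 0 ∧
    (∀ θ ∈ Set.Ioo (0 : ℝ) (2 * Real.pi),
      κ / 2 * deriv (deriv f) θ + deriv f θ * (α * Real.cot (θ / 2) - μ) - 1 = 0) ∧
    (∀ ε : ℝ, 0 < ε → ε < X0 →
      (2 / (4 * α + κ)) * Real.exp (-8 * |μ| * Real.pi / κ)
          * (2 * Real.sin (X0 / 2) / X0) ^ (4 * α / κ)
          * (κ * X0 ^ (4 * α / κ + 1) / (4 * α - κ) * ε ^ (1 - 4 * α / κ)
              - (4 * α + κ) / (8 * α - 2 * κ) * X0 ^ 2)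
        ≤ f ε) := by
  obtain rfl :
      f = fun θ => 2 / κ * ∫ y in θ..X0, tailRatio (weight (4 * α / κ) (-2 * μ / κ)) X0 y :=
    funext fun θ => by simp only [hf, tailRatio, weight, integral_div, div_mul_eq_mul_div]
  set r := 4 * α / κ with hr
  set c := -2 * μ / κ with hc
  have hr1 : 1 < r := (one_lt_div hκ).2 hκα
  have hw := continuous_weight (c := c) (by linarith : 0 ≤ r)
  have hpos : ∀ y ∈ Ioo 0 (2 * π), 0 < weight r c y := fun y hy => weight_pos hy
  have hf' : ∀ θ ∈ Ioo 0 (2 * π), deriv (fun θ => ∫ y in θ..X0, tailRatio (weight r c) X0 y) θ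
      = -tailRatio (weight r c) X0 θ :=
    fun θ hθ => (hasDerivAt_integral_tailRatio hw hpos hX0 hθ).deriv
  refine ⟨fun θ hθ => ?_, ?_, ?_, fun θ hθ => ?_, fun ε hε hεX => ?_⟩
  · exact mul_nonneg (by positivity) (integral_tailRatio_nonneg fun u hu =>
      (hpos u (ordConnected_Ioo.uIcc_subset hθ hX0 hu)).le)
  · simp
  · rw [deriv_const_mul_field']
    beta_reduce
    rw [hf' X0 hX0, tailRatio]
    simp
  · rw [deriv_const_mul_field', deriv_const_mul_field']
    beta_reduce
    rw [hf' θ hθ,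
      (hasDerivAt_deriv_integral_tailRatio hw hpos hX0 hθ (hasDerivAt_weight hθ)).deriv, hr, hc]
    field_simp
    ring
  · have key := integral_tailRatio_weight_ge (c := c) hr1 hε hεX.le hX0.2
      (by linarith [hX0.2] : X0 ≤ 4 * π)
    rw [show -(|c| * (4 * π)) = -8 * |μ| * π / κ by rw [hc, abs_div, abs_of_pos hκ]; simp; ring]
      at key
    have hQ : 0 ≤ (2 * sin (X0 / 2) / X0) ^ r :=
      rpow_nonneg (div_nonneg (mul_nonneg zero_le_two (sin_half_pos hX0).le) hX0.1.le) r
    rw [mul_assoc (2 / (4 * α + κ))]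
    exact (two_div_add_mul_le_two_div_mul hκ hκα (mul_nonneg (exp_pos _).le hQ)).trans
      (mul_le_mul_of_nonneg_left key (by positivity))

/-- Properties of the auxiliary function `f` for the radial Bessel-type estimate:
nonnegativity on `(0, 2π)`, the ODE `(κ/2) f'' + f'(α cot(θ/2) - μ) - 1 = 0` with
`f(X₀) = 0`, `f'(X₀) = 0`, and the lower bound for `f(ε)` when `0 < ε < X₀`. -/
theorem radial_Bessel_auxiliary_function (κ α μ X0 : ℝ)
    (hκ : 0 < κ) (hκα : κ < 4 * α) (hα : 0 < α)
    (hX0 : X0 ∈ Set.Ioo (0 : ℝ) (2 * Real.pi))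
    (f : ℝ → ℝ)
    (hf : ∀ θ : ℝ, f θ = (2 / κ) * ∫ y in θ..X0, ∫ u in y..X0,
        (Real.sin (u / 2) ^ (4 * α / κ) * Real.exp (-2 * μ * u / κ))
          / (Real.sin (y / 2) ^ (4 * α / κ) * Real.exp (-2 * μ * y / κ))) :
    (∀ θ ∈ Set.Ioo (0 : ℝ) (2 * Real.pi), 0 ≤ f θ) ∧
    f X0 = 0 ∧ deriv f X0 = 0 ∧
    (∀ θ ∈ Set.Ioo (0 : ℝ) (2 * Real.pi),
      κ / 2 * deriv (deriv f) θ + deriv f θ * (α * Real.cot (θ / 2) - μ) - 1 = 0) ∧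
    (∀ ε : ℝ, 0 < ε → ε < X0 →
      (2 / (4 * α + κ)) * Real.exp (-8 * |μ| * Real.pi / κ)
          * (2 * Real.sin (X0 / 2) / X0) ^ (4 * α / κ)
          * (κ * X0 ^ (4 * α / κ + 1) / (4 * α - κ) * ε ^ (1 - 4 * α / κ)
              - (4 * α + κ) / (8 * α - 2 * κ) * X0 ^ 2)
        ≤ f ε) :=
  radial_Bessel_auxiliary_function_general κ α μ X0 hκ hκα hX0 f hf
end
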